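/- Let p be a rational number, let x be a function from 3-element subsets of Fin 5 to ℚ, and let y be a function from 2-element subsets of Fin 5 to ℚ. Assume that for every 3-element subset {i,j,k} of Fin 5: y{i,j} + y{i,k} + y{j,k} = 2·x{i,j,k} + 2p. Then for any bijection ε : ZMod 5 → Fin 5, ∑_{i ∈ ZMod 5} y{ε(i), ε(i+1)} = 10p/3 + (4/3)·∑_{i ∈ ZMod 5} x{ε(i), ε(i+1), ε(i+2)} − (2/3)·∑_{i ∈ ZMod 5} x{ε(i), ε(i+2), ε(i+4)}. -/

import Mathlib

/-!
Write `S k` for the sum of `y` over the chords `{ε i, ε (i + k)}` of the pentagon `ε`, so that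
`S 1` is the sum over its sides and `S 2` the sum over its diagonals; `S (-k) = S k`.
Summing the hypothesis over the five triangles `{i, i+1, i+2}` gives `2 S 1 + S 2 = 2 X₁ + 10 p`,
and over the five triangles `{i, i+2, i+4}` gives `S 1 + 2 S 2 = 2 X₂ + 10 p`; eliminating `S 2`
yields `3 S 1 = 4 X₁ - 2 X₂ + 10 p`.
-/

open Finset

variable {G α : Type*} [AddCommGroup G] [Fintype G] [DecidableEq α]

def chordSum (y : Finset α → ℚ) (ε : G → α) (k : G) : ℚ :=
  ∑ i, y {ε i, ε (i + k)}

lemma sum_pair_add_eq_chordSum (y : Finset α → ℚ) (ε : G → α) (a b : G) :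
    ∑ i, y {ε (i + a), ε (i + b)} = chordSum y ε (b - a) := by
  rw [chordSum, ← Equiv.sum_comp (Equiv.addRight a) fun j => y {ε j, ε (j + (b - a))}]
  simp only [Equiv.coe_addRight, add_add_sub_cancel]

lemma chordSum_neg (y : Finset α → ℚ) (ε : G → α) (k : G) :
    chordSum y ε (-k) = chordSum y ε k := by
  rw [← zero_sub, ← sum_pair_add_eq_chordSum, chordSum]
  simp only [add_zero, pair_comm]

lemma chordSum_triangle (p : ℚ) (x y : Finset α → ℚ)
    (hxy : ∀ i j k : α, i ≠ j → i ≠ k → j ≠ k →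
      y {i, j} + y {i, k} + y {j, k} = 2 * x {i, j, k} + 2 * p)
    {ε : G → α} (hε : Function.Injective ε) {a b : G} (ha : a ≠ 0) (hb : b ≠ 0) (hab : a ≠ b) :
    chordSum y ε a + chordSum y ε b + chordSum y ε (b - a) =
      2 * ∑ i, x {ε i, ε (i + a), ε (i + b)} + Fintype.card G * (2 * p) := by
  have hsum : ∀ i, y {ε i, ε (i + a)} + y {ε i, ε (i + b)} + y {ε (i + a), ε (i + b)} =
      2 * x {ε i, ε (i + a), ε (i + b)} + 2 * p := fun i =>
    hxy _ _ _ (hε.ne (by simpa using ha)) (hε.ne (by simpa using hb))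
      (hε.ne (by simpa using hab))
  rw [chordSum, chordSum, ← sum_pair_add_eq_chordSum, ← sum_add_distrib, ← sum_add_distrib,
    sum_congr rfl fun i _ => hsum i, sum_add_distrib, ← mul_sum, sum_const, card_univ,
    nsmul_eq_mul]

/-- Solution of the linear system relating pair and triple component counts. -/
theorem stmt_4 (p : ℚ) (x y : Finset (Fin 5) → ℚ)
    (hxy : ∀ i j k : Fin 5, i ≠ j → i ≠ k → j ≠ k →
      y {i, j} + y {i, k} + y {j, k} = 2 * x {i, j, k} + 2 * p)
    (ε : ZMod 5 ≃ Fin 5) :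
    ∑ i : ZMod 5, y {ε i, ε (i + 1)} =
      10 * p / 3 + (4 / 3) * ∑ i : ZMod 5, x {ε i, ε (i + 1), ε (i + 2)}
        - (2 / 3) * ∑ i : ZMod 5, x {ε i, ε (i + 2), ε (i + 4)} := by
  have consecutive := chordSum_triangle p x y hxy ε.injective (a := 1) (b := 2)
    (by decide) (by decide) (by decide)
  have alternate := chordSum_triangle p x y hxy ε.injective (a := 2) (b := 4)
    (by decide) (by decide) (by decide)
  have side_neg : chordSum y ε 4 = chordSum y ε 1 := chordSum_neg y ε 1
  rw [show (2 - 1 : ZMod 5) = 1 by decide] at consecutive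
  rw [show (4 - 2 : ZMod 5) = 2 by decide, side_neg] at alternate
  rw [ZMod.card] at consecutive alternate
  push_cast at consecutive alternate
  change chordSum y ε 1 = _
  linarith
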